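/- Fix (Θ, B). The variational objective J_q(Θ, B, M, S) is concave in (M, S) on the set where all entries of S are positive, for any convex function b. -/

import Mathlib

open MeasureTheory ProbabilityTheory Real

/-!
For a fixed draw `u` of the latent noise, the natural parameter
`O + XΘᵀ + (M + S ⊙ u)Bᵀ` is affine in `(M, S)`, so `b` of it is convex in `(M, S)`;
integrating in `u` preserves convexity, hence the expected log-likelihood is an affine
function minus a convex one. The penalty is, up to the factor `1/2`, a sum of
`m² + s² - 2 log s - 1`, which is convex on `s > 0` because `-log` is.
-/

open Set

section Sum

variable {𝕜 E β ι : Type*} [Semiring 𝕜] [PartialOrder 𝕜] [AddCommMonoid E] [SMul 𝕜 E]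
  [AddCommMonoid β] [PartialOrder β] [IsOrderedAddMonoid β] [Module 𝕜 β] {s : Set E}

theorem ConvexOn.finset_sum {t : Finset ι} {f : ι → E → β} (hs : Convex 𝕜 s)
    (hf : ∀ i ∈ t, ConvexOn 𝕜 s (f i)) : ConvexOn 𝕜 s fun x => ∑ i ∈ t, f i x := by
  classical
  induction t using Finset.induction_on with
  | empty => simpa only [Finset.sum_empty] using convexOn_const (0 : β) hs
  | insert a t ha ih =>
    simp only [Finset.sum_insert ha]
    exact (hf a (Finset.mem_insert_self a t)).add
      (ih fun i hi => hf i (Finset.mem_insert_of_mem hi))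

theorem ConcaveOn.finset_sum {t : Finset ι} {f : ι → E → β} (hs : Convex 𝕜 s)
    (hf : ∀ i ∈ t, ConcaveOn 𝕜 s (f i)) : ConcaveOn 𝕜 s fun x => ∑ i ∈ t, f i x :=
  ConvexOn.finset_sum (β := βᵒᵈ) hs hf

end Sum

section ParametricIntegral

variable {α E : Type*} [MeasurableSpace α] {μ : Measure α} [AddCommGroup E] [Module ℝ E]
  {s : Set E}

theorem convexOn_parametric_integral {g : E → α → ℝ} (hs : Convex ℝ s)
    (hg : ∀ u, ConvexOn ℝ s fun x => g x u) (hint : ∀ x ∈ s, Integrable (g x) μ) :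
    ConvexOn ℝ s fun x => ∫ u, g x u ∂μ := by
  refine ⟨hs, fun x hx y hy a b ha hb hab => ?_⟩
  calc ∫ u, g (a • x + b • y) u ∂μ
      ≤ ∫ u, (a * g x u + b * g y u) ∂μ :=
        integral_mono (hint _ (hs hx hy ha hb hab))
          (((hint x hx).const_mul a).add ((hint y hy).const_mul b))
          fun u => (hg u).2 hx hy ha hb hab
    _ = a • ∫ u, g x u ∂μ + b • ∫ u, g y u ∂μ := by
        rw [integral_add ((hint x hx).const_mul a) ((hint y hy).const_mul b),
          integral_const_mul, integral_const_mul, smul_eq_mul, smul_eq_mul]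

theorem concaveOn_mul_add_sub_integral_comp_add {b : ℝ → ℝ} (hs : Convex ℝ s)
    (hb : ConvexOn ℝ univ b) (y c : ℝ) (L : E →ₗ[ℝ] ℝ) (Λ : α → E →ₗ[ℝ] ℝ)
    (hint : ∀ x ∈ s, Integrable (fun u => b (c + Λ u x)) μ) :
    ConcaveOn ℝ s fun x => y * (c + L x) - ∫ u, b (c + Λ u x) ∂μ := by
  have haffine : ConcaveOn ℝ s fun x => y * (c + L x) :=
    (((y • L).concaveOn hs).add_const (y * c)).congr fun x _ => by
      simp only [Pi.add_apply, LinearMap.smul_apply, smul_eq_mul]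
      ring
  have hexpected : ConvexOn ℝ s fun x => ∫ u, b (c + Λ u x) ∂μ :=
    convexOn_parametric_integral hs
      (fun u => ((hb.translate_right c).comp_linearMap (Λ u)).subset (subset_univ s) hs) hint
  exact haffine.sub hexpected

end ParametricIntegral

theorem convexOn_sq_add_sq_sub_two_mul_log_sub_one :
    ConvexOn ℝ (univ ×ˢ Ioi 0) fun x : ℝ × ℝ => x.1 ^ 2 + x.2 ^ 2 - 2 * log x.2 - 1 := by
  refine ⟨convex_univ.prod (convex_Ioi 0), fun x hx y hy a b ha hb hab => ?_⟩
  have hsq (t t' : ℝ) : (a • t + b • t') ^ 2 ≤ a • t ^ 2 + b • t' ^ 2 :=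
    (even_two.convexOn_pow (𝕜 := ℝ)).2 trivial trivial ha hb hab
  have hlog : a • log x.2 + b • log y.2 ≤ log (a • x.2 + b • y.2) :=
    strictConcaveOn_log_Ioi.concaveOn.2 hx.2 hy.2 ha hb hab
  simp only [Prod.fst_add, Prod.snd_add, Prod.smul_fst, Prod.smul_snd, smul_eq_mul] at hsq hlog ⊢
  linear_combination hsq x.1 y.1 + hsq x.2 y.2 + 2 * hlog + hab

section LatentLinearMaps

variable {ι κ : Type*} [Fintype κ]

def rowDot (v : κ → ℝ) (i : ι) : (ι → κ → ℝ) →ₗ[ℝ] ℝ where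
  toFun Z := ∑ k, Z i k * v k
  map_add' Z W := by
    simp only [Pi.add_apply, add_mul, Finset.sum_add_distrib]
  map_smul' a Z := by
    simp only [Pi.smul_apply, smul_eq_mul, mul_assoc, RingHom.id_apply, Finset.mul_sum]

/-- The paper's latent variable `M + S ⊙ U` at the draw `U = u`. -/
def latentReparam (u : κ → ℝ) : (ι → κ → ℝ) × (ι → κ → ℝ) →ₗ[ℝ] (ι → κ → ℝ) where
  toFun P i k := P.1 i k + P.2 i k * u k
  map_add' P Q := by
    funext i k
    simp only [Prod.fst_add, Prod.snd_add, Pi.add_apply]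
    ring
  map_smul' a P := by
    funext i k
    simp only [Prod.smul_fst, Prod.smul_snd, Pi.smul_apply, smul_eq_mul, RingHom.id_apply]
    ring

end LatentLinearMaps

theorem variational_objective_concave_in_M_S_general {n p d q : ℕ}
    (Y O : Fin n → Fin p → ℝ) (X : Fin n → Fin d → ℝ)
    (Θ : Fin p → Fin d → ℝ) (B : Fin p → Fin q → ℝ)
    (bfun : ℝ → ℝ) (hb : ConvexOn ℝ Set.univ bfun) (KY : ℝ)
    (γ : Measure (Fin q → ℝ))
    (hint : ∀ (M S : Fin n → Fin q → ℝ) (i : Fin n) (j : Fin p),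
      Integrable (fun u =>
        bfun (O i j + ∑ k, X i k * Θ j k + ∑ k, (M i k + S i k * u k) * B j k)) γ) :
    ConcaveOn ℝ {P : (Fin n → Fin q → ℝ) × (Fin n → Fin q → ℝ) | ∀ i k, 0 < P.2 i k}
      (fun P : (Fin n → Fin q → ℝ) × (Fin n → Fin q → ℝ) =>
        (∑ i, ∑ j,
          (Y i j * (O i j + ∑ k, X i k * Θ j k + ∑ k, P.1 i k * B j k) -
            ∫ u, bfun (O i j + ∑ k, X i k * Θ j k +
              ∑ k, (P.1 i k + P.2 i k * u k) * B j k) ∂γ)) -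
        (1 / 2) * (∑ i, ∑ k, ((P.1 i k) ^ 2 + (P.2 i k) ^ 2 - 2 * Real.log (P.2 i k) - 1)) -
        KY) := by
  set E := Fin n → Fin q → ℝ
  set s := {P : E × E | ∀ i k, 0 < P.2 i k}
  have hs : Convex ℝ s := fun P hP Q hQ a c ha hc hac i k =>
    convex_Ioi (0 : ℝ) (hP i k) (hQ i k) ha hc hac
  -- `rowDot` and `latentReparam` unfold to the sums of the statement, so the final `exact`
  -- matches the objective up to definitional unfolding.
  have hloglik : ∀ i j, ConcaveOn ℝ s fun P : E × E =>
      Y i j * (O i j + ∑ k, X i k * Θ j k + rowDot (B j) i P.1) -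
        ∫ u, bfun (O i j + ∑ k, X i k * Θ j k + rowDot (B j) i (latentReparam u P)) ∂γ :=
    fun i j => concaveOn_mul_add_sub_integral_comp_add hs hb (Y i j) _
      (rowDot (B j) i ∘ₗ LinearMap.fst ℝ E E) (fun u => rowDot (B j) i ∘ₗ latentReparam u)
      fun P _ => hint P.1 P.2 i j
  have hpenalty : ∀ i k, ConvexOn ℝ s fun P : E × E =>
      P.1 i k ^ 2 + P.2 i k ^ 2 - 2 * log (P.2 i k) - 1 := by
    intro i k
    let entry : E →ₗ[ℝ] ℝ := LinearMap.proj k ∘ₗ LinearMap.proj i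
    exact (convexOn_sq_add_sq_sub_two_mul_log_sub_one.comp_linearMap (entry.prodMap entry)).subset
      (fun P hP => ⟨trivial, hP i k⟩) hs
  exact ((ConcaveOn.finset_sum hs fun i _ => ConcaveOn.finset_sum hs fun j _ => hloglik i j).sub
    ((ConvexOn.finset_sum hs fun i _ => ConvexOn.finset_sum hs fun k _ => hpenalty i k).smul
      (by norm_num : (0 : ℝ) ≤ 1 / 2))).sub (convexOn_const KY hs)

/-- Proposition 1 of the paper (second half): for fixed model parameters `(Θ, B)`, the
variational objective `J_q(Θ, B, M, S)` is concave in `(M, S)` on the set where all entries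
of `S` are positive, for any convex `b`. -/
theorem variational_objective_concave_in_M_S {n p d q : ℕ}
    (Y O : Fin n → Fin p → ℝ) (X : Fin n → Fin d → ℝ)
    (Θ : Fin p → Fin d → ℝ) (B : Fin p → Fin q → ℝ)
    (bfun : ℝ → ℝ) (hb : ConvexOn ℝ Set.univ bfun) (KY : ℝ)
    (γ : Measure (Fin q → ℝ)) (hγ : γ = Measure.pi fun _ => gaussianReal 0 1)
    (hint : ∀ (M S : Fin n → Fin q → ℝ) (i : Fin n) (j : Fin p),
      Integrable (fun u =>
        bfun (O i j + ∑ k, X i k * Θ j k + ∑ k, (M i k + S i k * u k) * B j k)) γ) :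
    ConcaveOn ℝ {P : (Fin n → Fin q → ℝ) × (Fin n → Fin q → ℝ) | ∀ i k, 0 < P.2 i k}
      (fun P : (Fin n → Fin q → ℝ) × (Fin n → Fin q → ℝ) =>
        (∑ i, ∑ j,
          (Y i j * (O i j + ∑ k, X i k * Θ j k + ∑ k, P.1 i k * B j k) -
            ∫ u, bfun (O i j + ∑ k, X i k * Θ j k +
              ∑ k, (P.1 i k + P.2 i k * u k) * B j k) ∂γ)) -
        (1 / 2) * (∑ i, ∑ k, ((P.1 i k) ^ 2 + (P.2 i k) ^ 2 - 2 * Real.log (P.2 i k) - 1)) -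
        KY) :=
  variational_objective_concave_in_M_S_general Y O X Θ B bfun hb KY γ hint
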